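/- Let M ⊂ ℙ^N be a linear subspace of dimension k and let X ⊂ ℙ^N be a smooth complete intersection of dimension n and codimension r (so N = n + r) containing M, with 2k < n. Then there exists a hyperplane H ⊂ ℙ^N passing through M which does not contain the embedded tangent space T_p X for any point p ∈ M. -/

import Mathlib

/-!
Hyperplanes through `M` form a space `W` of dimension `n + r - k`. A hyperplane `a` contains
`T_p X` exactly when `a` is a linear combination of the gradients `∇F_i(p)`, and by homogeneity
this only depends on the point `[p]` of `ℙ(M)`. On each of the `k + 1` affine charts of `ℙ(M)`
the bad hyperplanes are therefore the image of a holomorphic map from `ℂ^k × ℂ^r`. As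
`k + r < n + r - k`, these finitely many images have Hausdorff dimension smaller than that of `W`
(the easy case of Sard's theorem), so they do not cover `W`.
-/

noncomputable section

open MvPolynomial

/-- A family of homogeneous polynomials cuts out a *smooth* complete
intersection (in projective space) iff the affine cone is smooth away from the
origin, i.e. at every nonzero common zero the gradients of the defining
equations are linearly independent. -/
def ConeSmooth {σ : Type*} [Fintype σ] {r : ℕ}
    (F : Fin r → MvPolynomial σ ℂ) : Prop :=
  ∀ x : σ → ℂ, x ≠ 0 → (∀ i, eval x (F i) = 0) →
    LinearIndependent ℂ
      (fun i : Fin r => fun j : σ => eval x (pderiv j (F i)))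

/-- The linear form `Σ_j ∂_j F_i(x) · v_j` cut out by the gradient of the
`i`-th defining equation at the point `x` of the affine cone. -/
def gradForm {N s : ℕ} (F : Fin s → MvPolynomial (Fin N) ℂ)
    (x : Fin N → ℂ) (i : Fin s) : (Fin N → ℂ) →ₗ[ℂ] ℂ :=
  ∑ j, eval x (pderiv j (F i)) • LinearMap.proj j

/-- The affine cone over the embedded (projective) tangent space at `x` of the
variety cut out by the equations `F`: the common kernel of the gradients. -/
def TangentCone {N s : ℕ} (F : Fin s → MvPolynomial (Fin N) ℂ)
    (x : Fin N → ℂ) : Submodule ℂ (Fin N → ℂ) :=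
  ⨅ i, LinearMap.ker (gradForm F x i)
theorem MvPolynomial.IsHomogeneous.eval_smul {R σ : Type*} [CommSemiring R]
    {P : MvPolynomial σ R} {d : ℕ} (hP : P.IsHomogeneous d) (c : R) (x : σ → R) :
    eval (c • x) P = c ^ d * eval x P := by
  conv_lhs => rw [P.as_sum]
  conv_rhs => rw [P.as_sum]
  rw [map_sum, map_sum, Finset.mul_sum]
  refine Finset.sum_congr rfl fun m hm => ?_
  simp only [eval_monomial, Pi.smul_apply, smul_eq_mul, mul_pow, Finsupp.prod_mul]
  rw [Finsupp.prod, Finset.prod_pow_eq_pow_sum, ← hP.degree_eq_sum_deg_support hm]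
  ring

open Set Module in
theorem dense_compl_iUnion_range_of_finrank_lt {ι E F : Type*} [Countable ι]
    [NormedAddCommGroup E] [NormedSpace ℝ E] [FiniteDimensional ℝ E]
    [NormedAddCommGroup F] [NormedSpace ℝ F] [FiniteDimensional ℝ F]
    {f : ι → E → F} (hf : ∀ i, ContDiff ℝ 1 (f i)) (h : finrank ℝ E < finrank ℝ F) :
    Dense (⋃ i, range (f i))ᶜ := by
  refine dense_compl_of_dimH_lt_finrank ?_
  rw [dimH_iUnion]
  exact (iSup_le fun i => (hf i).dimH_range_le).trans_lt (Nat.cast_lt.2 h)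

open Set Module in
theorem Submodule.exists_mem_forall_notMem_range {ι E V : Type*} [Countable ι]
    [NormedAddCommGroup E] [NormedSpace ℂ E] [FiniteDimensional ℂ E]
    [NormedAddCommGroup V] [NormedSpace ℂ V] [FiniteDimensional ℂ V]
    (W : Submodule ℂ V) {f : ι → E → V} (hf : ∀ i, ContDiff ℂ 1 (f i))
    (h : finrank ℂ E < finrank ℂ W) : ∃ a ∈ W, ∀ i, a ∉ range (f i) := by
  obtain ⟨ρ, hρ⟩ := W.subtype.exists_leftInverse_of_injective W.ker_subtype
  have hρf : ∀ i, ContDiff ℝ 1 (ρ ∘ f i) := fun i =>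
    (ρ.toContinuousLinearMap.contDiff.comp (hf i)).restrict_scalars ℝ
  obtain ⟨a, ha⟩ := (dense_compl_iUnion_range_of_finrank_lt hρf (by
    rw [finrank_real_of_complex, finrank_real_of_complex]; omega)).nonempty
  refine ⟨a, a.2, fun i ⟨z, hz⟩ => ha (mem_iUnion.2 ⟨i, z, ?_⟩)⟩
  rw [Function.comp_apply, hz]
  exact LinearMap.congr_fun hρ a

section AffineChart

variable {K V : Type*} {k : ℕ}

def affineChart [Semiring K] [AddCommMonoid V] [Module K V] (e : Fin (k + 1) → V)
    (m : Fin (k + 1)) (z : Fin k → K) : V :=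
  e m + ∑ j, z j • e (m.succAbove j)

theorem exists_smul_eq_affineChart [Field K] [AddCommGroup V] [Module K V]
    {e : Fin (k + 1) → V} {p : V} (hp : p ∈ Submodule.span K (Set.range e)) (hp0 : p ≠ 0) :
    ∃ m, ∃ z : Fin k → K, ∃ c : K, c ≠ 0 ∧ c • p = affineChart e m z := by
  obtain ⟨u, rfl⟩ := (Submodule.mem_span_range_iff_exists_fun K).1 hp
  obtain ⟨m, hm⟩ : ∃ m, u m ≠ 0 := by
    by_contra! h
    simp [h] at hp0
  refine ⟨m, fun j => (u m)⁻¹ * u (m.succAbove j), (u m)⁻¹, inv_ne_zero hm, ?_⟩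
  rw [Fin.sum_univ_succAbove _ m, smul_add, Finset.smul_sum, affineChart]
  simp [smul_smul, hm]

@[fun_prop]
theorem contDiff_affineChart [NormedAddCommGroup V] [NormedSpace ℂ V] (e : Fin (k + 1) → V)
    (m : Fin (k + 1)) {n : WithTop ℕ∞} : ContDiff ℂ n (affineChart (K := ℂ) e m) := by
  unfold affineChart
  fun_prop

end AffineChart

section DotProduct

variable {K ι : Type*} [Field K] [Fintype ι] [DecidableEq ι]

def dotProductAnnihilator (M : Submodule K (ι → K)) : Submodule K (ι → K) :=
  M.dualAnnihilator.comap (dotProductEquiv K ι).toLinearMap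

theorem mem_dotProductAnnihilator {M : Submodule K (ι → K)} {a : ι → K} :
    a ∈ dotProductAnnihilator M ↔ ∀ x ∈ M, a ⬝ᵥ x = 0 :=
  Submodule.mem_dualAnnihilator _

theorem finrank_dotProductAnnihilator_add_finrank (M : Submodule K (ι → K)) :
    Module.finrank K (dotProductAnnihilator M) + Module.finrank K M = Fintype.card ι := by
  rw [dotProductAnnihilator, Submodule.comap_equiv_eq_map_symm, LinearEquiv.finrank_map_eq,
    add_comm, Subspace.finrank_add_finrank_dualAnnihilator_eq, Module.finrank_fintype_fun_eq_card]

end DotProduct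

section Gradient

variable {N s : ℕ}

def gradientAt (P : MvPolynomial (Fin N) ℂ) (x : Fin N → ℂ) : Fin N → ℂ :=
  fun j => eval x (pderiv j P)

@[fun_prop]
theorem contDiff_gradientAt (P : MvPolynomial (Fin N) ℂ) {n : WithTop ℕ∞} :
    ContDiff ℂ n (gradientAt P) :=
  contDiff_pi.2 fun j => (AnalyticOnNhd.eval_mvPolynomial (pderiv j P)).contDiff

theorem gradientAt_smul {P : MvPolynomial (Fin N) ℂ} {d : ℕ} (hP : P.IsHomogeneous d)
    (c : ℂ) (x : Fin N → ℂ) : gradientAt P (c • x) = c ^ (d - 1) • gradientAt P x :=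
  funext fun _ => hP.pderiv.eval_smul c x

theorem gradForm_eq_dotProductEquiv (F : Fin s → MvPolynomial (Fin N) ℂ) (x : Fin N → ℂ)
    (i : Fin s) : gradForm F x i = dotProductEquiv ℂ (Fin N) (gradientAt (F i) x) := by
  ext v
  simp [gradForm, gradientAt, dotProduct]

theorem tangentCone_smul {F : Fin s → MvPolynomial (Fin N) ℂ} {d : Fin s → ℕ}
    (hF : ∀ i, (F i).IsHomogeneous (d i)) {c : ℂ} (hc : c ≠ 0) (x : Fin N → ℂ) :
    TangentCone F (c • x) = TangentCone F x := by
  simp only [TangentCone, gradForm_eq_dotProductEquiv, gradientAt_smul (hF _), map_smul,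
    LinearMap.ker_smul _ _ (pow_ne_zero _ hc)]

theorem exists_sum_smul_gradientAt_eq {F : Fin s → MvPolynomial (Fin N) ℂ} {x a : Fin N → ℂ}
    (h : ∀ v ∈ TangentCone F x, a ⬝ᵥ v = 0) :
    ∃ c : Fin s → ℂ, ∑ i, c i • gradientAt (F i) x = a := by
  have hspan := mem_span_of_iInf_ker_le_ker (K := dotProductEquiv ℂ (Fin N) a) h
  obtain ⟨c, hc⟩ := (Submodule.mem_span_range_iff_exists_fun ℂ).1 hspan
  refine ⟨c, (dotProductEquiv ℂ (Fin N)).injective ?_⟩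
  simpa [map_sum, gradForm_eq_dotProductEquiv] using hc

end Gradient

theorem hyperplane_through_linear_space_avoiding_tangents_general
    (n r k : ℕ) (hk : 2 * k < n) (d : Fin r → ℕ)
    (F : Fin r → MvPolynomial (Fin (n + r + 1)) ℂ)
    (hhom : ∀ i, (F i).IsHomogeneous (d i))
    (M : Submodule ℂ (Fin (n + r + 1) → ℂ))
    (hMrk : Module.finrank ℂ M = k + 1) :
    ∃ a : Fin (n + r + 1) → ℂ, a ≠ 0 ∧
      (∀ x ∈ M, ∑ j, a j * x j = 0) ∧
      (∀ p ∈ M, p ≠ 0 → ∃ v ∈ TangentCone F p, ∑ j, a j * v j ≠ 0) := by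
  obtain ⟨e, he⟩ : ∃ e : Fin (k + 1) → Fin (n + r + 1) → ℂ, Submodule.span ℂ (Set.range e) = M :=
    let b := Module.finBasisOfFinrankEq ℂ M hMrk
    ⟨M.subtype ∘ b, by
      rw [Set.range_comp, Submodule.span_image, b.span_eq, Submodule.map_subtype_top]⟩
  let ψ (m : Fin (k + 1)) (zc : (Fin k → ℂ) × (Fin r → ℂ)) : Fin (n + r + 1) → ℂ :=
    ∑ i, zc.2 i • gradientAt (F i) (affineChart e m zc.1)
  have hdim : Module.finrank ℂ ((Fin k → ℂ) × (Fin r → ℂ)) <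
      Module.finrank ℂ (dotProductAnnihilator M) := by
    have := finrank_dotProductAnnihilator_add_finrank M
    simp only [Module.finrank_prod, Module.finrank_fin_fun, Fintype.card_fin, hMrk] at this ⊢
    omega
  obtain ⟨a, haM, hψ⟩ := (dotProductAnnihilator M).exists_mem_forall_notMem_range
    (f := ψ) (fun m => by simp only [ψ]; fun_prop) hdim
  refine ⟨a, ?_, mem_dotProductAnnihilator.1 haM, fun p hp hp0 => ?_⟩
  · rintro rfl
    exact hψ 0 ⟨0, by simp [ψ]⟩
  · by_contra! hbad
    obtain ⟨m, z, c, hc, hcp⟩ := exists_smul_eq_affineChart (he ▸ hp) hp0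
    rw [← tangentCone_smul hhom hc, hcp] at hbad
    obtain ⟨b, hb⟩ := exists_sum_smul_gradientAt_eq hbad
    exact hψ m ⟨(z, b), hb⟩

/-- the Claim in the proof of Lemma 3.5: Let `M ⊂ ℙ^N` be a
linear subspace of dimension `k` (affine cone of dimension `k + 1`) and
`X ⊂ ℙ^N` a smooth complete intersection of dimension `n` and codimension `r`
(so `N = n + r`) containing `M`, with `2k < n`.  Then there is a hyperplane
`H = {Σ a_j x_j = 0}` of `ℙ^N` passing through `M` which contains no embedded
tangent space `T_p X` for `p ∈ M`. -/
theorem hyperplane_through_linear_space_avoiding_tangents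
    (n r k : ℕ) (hk : 2 * k < n) (d : Fin r → ℕ)
    (F : Fin r → MvPolynomial (Fin (n + r + 1)) ℂ)
    (hhom : ∀ i, (F i).IsHomogeneous (d i))
    (hsm : ConeSmooth F)
    (M : Submodule ℂ (Fin (n + r + 1) → ℂ))
    (hMrk : Module.finrank ℂ M = k + 1)
    (hMX : ∀ x ∈ M, ∀ i, eval x (F i) = 0) :
    ∃ a : Fin (n + r + 1) → ℂ, a ≠ 0 ∧
      (∀ x ∈ M, ∑ j, a j * x j = 0) ∧
      (∀ p ∈ M, p ≠ 0 → ∃ v ∈ TangentCone F p, ∑ j, a j * v j ≠ 0) :=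
  hyperplane_through_linear_space_avoiding_tangents_general n r k hk d F hhom M hMrk

end
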